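/- arXiv:1102.3493 — 4 statements merged into one kernel-verified Lean document; each statement's English description precedes it below -/
import Mathlib

section
/- Let G = (X, Y, E) be a simple bipartite graph without 4-cycles where every vertex in X has degree k and every vertex in Y has degree l ≥ k ≥ 2. If |Y| = 1 + l(k-1) and |X| = l + l(l-1)(k-1)/k, then every pair of distinct vertices in Y has exactly one common neighbor in X; i.e., interpreting Y as elements and X as blocks (the block of x ∈ X being its neighborhood in Y), every pair of distinct elements of Y lies in exactly one block. -/
/-- If a simple bipartite graph with no `4`-cycles, `X`-degrees `k`,
`Y`-degrees `l ≥ k ≥ 2` meets the Moore bounds `|Y| = 1 + l(k-1)` and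
`|X| = l + l(l-1)(k-1)/k` (stated with denominators cleared), then every pair
of distinct vertices of `Y` has exactly one common neighbor in `X`, i.e. the
blocks (neighborhoods of vertices of `X`) form a Steiner system `S(2,k,|Y|)`. -/
theorem stmt3 {X Y : Type*} [Fintype X] [Fintype Y]
    (E : X → Y → Prop) (k l : ℕ) (hk : 2 ≤ k) (hkl : k ≤ l)
    (hdegX : ∀ x : X, Nat.card {y : Y // E x y} = k)
    (hdegY : ∀ y : Y, Nat.card {x : X // E x y} = l)
    (h4 : ¬ ∃ (x x' : X) (y y' : Y), x ≠ x' ∧ y ≠ y' ∧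
      E x y ∧ E x' y ∧ E x y' ∧ E x' y')
    (hcardY : Fintype.card Y = 1 + l * (k - 1))
    (hcardX : k * Fintype.card X = k * l + l * (l - 1) * (k - 1)) :
    ∀ y y' : Y, y ≠ y' → ∃! x : X, E x y ∧ E x y' := by
  classical
  -- degree in Finset form
  have hdeg : ∀ x : X, (Finset.univ.filter (fun y => E x y)).card = k := by
    intro x
    have h := hdegX x
    rwa [Nat.card_eq_fintype_card, Fintype.card_subtype] at h
  set T : Finset (X × Y × Y) :=
    Finset.univ.filter (fun p => p.2.1 ≠ p.2.2 ∧ E p.1 p.2.1 ∧ E p.1 p.2.2) with hT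
  -- fibers over X have size k*k - k
  have hfiber : ∀ x : X, (T.filter (fun p => p.1 = x)).card = k * k - k := by
    intro x
    have himg : T.filter (fun p => p.1 = x)
        = ((Finset.univ.filter (fun y => E x y)).offDiag).image (fun q => (x, q)) := by
      ext p
      simp only [hT, Finset.mem_filter, Finset.mem_image, Finset.mem_offDiag,
        Finset.mem_univ, true_and]
      constructor
      · rintro ⟨⟨hne, h1, h2⟩, rfl⟩
        exact ⟨p.2, ⟨h1, h2, hne⟩, rfl⟩
      · rintro ⟨q, ⟨h1, h2, hne⟩, rfl⟩
        exact ⟨⟨hne, h1, h2⟩, rfl⟩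
    rw [himg, Finset.card_image_of_injective _ (by intro a b h; simpa using h),
      Finset.offDiag_card, hdeg]
  have hcardT : T.card = Fintype.card X * (k * k - k) := by
    rw [Finset.card_eq_sum_card_fiberwise (f := fun p => p.1) (t := Finset.univ)
      (fun p _ => Finset.mem_univ p.1)]
    simp [hfiber, Finset.card_univ, mul_comm]
  -- the projection to the pair is injective on T
  have hinj : Set.InjOn (fun p : X × Y × Y => p.2) T := by
    intro p hp q hq hpq
    simp only [hT, Finset.coe_filter, Set.mem_setOf_eq] at hp hq
    obtain ⟨-, hne, h1, h2⟩ := hp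
    obtain ⟨-, -, h3, h4'⟩ := hq
    by_cases hx : p.1 = q.1
    · exact Prod.ext hx hpq
    · exfalso
      have hpq' : p.2 = q.2 := hpq
      exact h4 ⟨p.1, q.1, p.2.1, p.2.2, hx, hne, h1, by rw [hpq']; exact h3, h2,
        by rw [hpq']; exact h4'⟩
  have himgsub : T.image (fun p : X × Y × Y => p.2) ⊆ Finset.univ.offDiag := by
    intro q hq
    simp only [Finset.mem_image] at hq
    obtain ⟨p, hp, rfl⟩ := hq
    simp only [hT, Finset.mem_filter] at hp
    exact Finset.mem_offDiag.2 ⟨Finset.mem_univ _, Finset.mem_univ _, hp.2.1⟩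
  -- arithmetic: |X| * (k*k - k) = v*v - v
  set v := Fintype.card Y with hv
  have harith : Fintype.card X * (k * k - k) = v * v - v := by
    obtain ⟨a, rfl⟩ : ∃ a, k = a + 2 := ⟨k - 2, by omega⟩
    obtain ⟨b, rfl⟩ : ∃ b, l = b + (a + 2) := ⟨l - (a + 2), by omega⟩
    have hk1 : a + 2 - 1 = a + 1 := by omega
    have hl1 : b + (a + 2) - 1 = b + a + 1 := by omega
    rw [hk1] at hcardX hcardY
    rw [hl1] at hcardX
    have hkk : (a + 2) * (a + 2) - (a + 2) = (a + 2) * (a + 1) := by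
      have : (a + 2) * (a + 2) = (a + 2) * (a + 1) + (a + 2) := by ring
      omega
    have hvv : v * v - v = v * (v - 1) := by
      have : v * v = v * (v - 1) + v := by
        have hv1 : 1 ≤ v := by omega
        have : v - 1 + 1 = v := by omega
        nlinarith [this]
      omega
    have hv1 : v - 1 = (b + (a + 2)) * (a + 1) := by omega
    rw [hkk, hvv, hv1, hcardY]
    calc Fintype.card X * ((a + 2) * (a + 1))
        = ((a + 2) * Fintype.card X) * (a + 1) := by ring
      _ = ((a + 2) * (b + (a + 2)) + (b + (a + 2)) * (b + a + 1) * (a + 1)) * (a + 1) := by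
          rw [hcardX]
      _ = (1 + (b + (a + 2)) * (a + 1)) * ((b + (a + 2)) * (a + 1)) := by ring
  -- the image equals offDiag
  have hoff : (Finset.univ : Finset Y).offDiag.card = v * v - v := by
    rw [Finset.offDiag_card, Finset.card_univ]
  have himgcard : (T.image (fun p : X × Y × Y => p.2)).card = v * v - v := by
    rw [Finset.card_image_of_injOn hinj, hcardT, harith]
  have heq : T.image (fun p : X × Y × Y => p.2) = Finset.univ.offDiag :=
    Finset.eq_of_subset_of_card_le himgsub (by rw [himgcard, hoff])
  -- conclude
  intro y y' hne
  have hmem : (y, y') ∈ Finset.univ.offDiag :=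
    Finset.mem_offDiag.2 ⟨Finset.mem_univ _, Finset.mem_univ _, hne⟩
  rw [← heq, Finset.mem_image] at hmem
  obtain ⟨p, hp, hpe⟩ := hmem
  simp only [hT, Finset.mem_filter] at hp
  obtain ⟨-, -, h1, h2⟩ := hp
  have hy : p.2.1 = y := congrArg Prod.fst hpe
  have hy' : p.2.2 = y' := congrArg Prod.snd hpe
  refine ⟨p.1, ⟨hy ▸ h1, hy' ▸ h2⟩, ?_⟩
  intro x ⟨hx1, hx2⟩
  by_contra hxne
  exact h4 ⟨x, p.1, y, y', hxne, hne, hx1, hy ▸ h1, hx2, hy' ▸ h2⟩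
end

section
/- For a prime power q, there exists a simple bipartite graph G = (X, Y, E) with |X| = |Y| = q² + q + 1, in which every vertex has degree q + 1 and there are no cycles of length 4. -/
open scoped LinearAlgebra.Projectivization
open Projectivization Configuration

/-- A nonzero vector is determined by its projectivization class together with
the unit scaling it to the chosen representative. -/
noncomputable def projPartEquiv (K V : Type*) [Field K] [AddCommGroup V] [Module K V] :
    { v : V // v ≠ 0 } ≃ (ℙ K V) × Kˣ where
  toFun v := ⟨Projectivization.mk K v.1 v.2,
    Classical.choose (exists_smul_eq_mk_rep K v.1 v.2)⟩
  invFun pa := ⟨pa.2⁻¹ • pa.1.rep, by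
    simp [Units.smul_def, smul_ne_zero_iff, rep_nonzero]⟩
  left_inv v := by
    have h := Classical.choose_spec (exists_smul_eq_mk_rep K v.1 v.2)
    exact Subtype.ext (inv_smul_eq_iff.mpr h.symm)
  right_inv := by
    rintro ⟨p, a⟩
    have hne : (a⁻¹ • p.rep : V) ≠ 0 := by
      simp [Units.smul_def, smul_ne_zero_iff, rep_nonzero]
    have hmk : Projectivization.mk K (a⁻¹ • p.rep) hne = p := by
      conv_rhs => rw [← p.mk_rep]
      rw [mk_eq_mk_iff]
      exact ⟨a⁻¹, rfl⟩
    have h := Classical.choose_spec (exists_smul_eq_mk_rep K (a⁻¹ • p.rep : V) hne)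
    set b := Classical.choose (exists_smul_eq_mk_rep K (a⁻¹ • p.rep : V) hne) with hb
    have hrep : (b : K) • ((a⁻¹ : Kˣ) : K) • p.rep = p.rep := by
      rw [hmk] at h
      simpa [Units.smul_def] using h
    have hba : ((b : K) * ((a⁻¹ : Kˣ) : K)) • p.rep = (1 : K) • p.rep := by
      rw [mul_smul, one_smul]; exact hrep
    have : (b : K) * ((a⁻¹ : Kˣ) : K) = 1 := smul_left_injective K p.rep_nonzero hba
    have hba' : b = a := by
      have h1 : b * a⁻¹ = 1 := by
        rw [Units.ext_iff]
        simpa using this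
      rwa [mul_inv_eq_one] at h1
    rw [Prod.mk.injEq]
    exact ⟨hmk, hba'⟩

theorem stmt9_aux {n : ℕ} {K : Type*} [Field K] [Fintype K] (hK : Fintype.card K = n) :
    Nat.card (ℙ K (Fin 3 → K)) = n ^ 2 + n + 1 := by
  classical
  have hfin : Finite (ℙ K (Fin 3 → K)) :=
    Quotient.finite _
  have e := projPartEquiv K (Fin 3 → K)
  have hcard := Nat.card_congr e
  rw [Nat.card_prod] at hcard
  have h1 : Nat.card { v : Fin 3 → K // v ≠ 0 } = n ^ 3 - 1 := by
    rw [Nat.card_eq_fintype_card]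
    have : Fintype.card { v : Fin 3 → K // ¬ v = 0 } = n ^ 3 - 1 := by
      rw [Fintype.card_subtype_compl, Fintype.card_subtype_eq, Fintype.card_pi]
      simp [hK]
    simpa using this
  have h2 : Nat.card Kˣ = n - 1 := by
    rw [Nat.card_eq_fintype_card, Fintype.card_units, hK]
  have hn : 2 ≤ n := by
    rw [← hK]
    exact Fintype.one_lt_card
  have hfact : (n ^ 2 + n + 1) * (n - 1) = n ^ 3 - 1 := by
    cases' n with m
    · omega
    · simp only [Nat.succ_sub_one]
      ring_nf
      omega
  have key : Nat.card (ℙ K (Fin 3 → K)) * (n - 1) = (n ^ 2 + n + 1) * (n - 1) :=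
    calc Nat.card (ℙ K (Fin 3 → K)) * (n - 1)
        = Nat.card (ℙ K (Fin 3 → K)) * Nat.card Kˣ := by rw [h2]
      _ = n ^ 3 - 1 := by rw [← hcard, h1]
      _ = (n ^ 2 + n + 1) * (n - 1) := hfact.symm
  exact Nat.eq_of_mul_eq_mul_right (by omega) key

/-- For every prime power `q` there exists a simple bipartite graph with
`|X| = |Y| = q² + q + 1`, every vertex of degree `q + 1`, and no `4`-cycles
(the incidence graph of a projective plane of order `q`). -/
theorem stmt9 {q : ℕ} (hq : IsPrimePow q) :
    ∃ E : Fin (q ^ 2 + q + 1) → Fin (q ^ 2 + q + 1) → Prop,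
      (∀ x, Nat.card {y // E x y} = q + 1) ∧
      (∀ y, Nat.card {x // E x y} = q + 1) ∧
      ¬ ∃ x x' y y', x ≠ x' ∧ y ≠ y' ∧ E x y ∧ E x' y ∧ E x y' ∧ E x' y' := by
  classical
  obtain ⟨p, n, hp, hn, rfl⟩ := hq
  haveI : Fact (Nat.Prime p) := ⟨hp.nat_prime⟩
  set q := p ^ n with hqdef
  haveI : Fintype (GaloisField p n) := Fintype.ofFinite _
  have hK : Fintype.card (GaloisField p n) = q := by
    rw [← Nat.card_eq_fintype_card]
    exact GaloisField.card p n hn.ne'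
  haveI : Finite (ℙ (GaloisField p n) (Fin 3 → GaloisField p n)) := Quotient.finite _
  haveI hfin' : Fintype (ℙ (GaloisField p n) (Fin 3 → GaloisField p n)) :=
    Fintype.ofFinite _
  have hcardP : Fintype.card (ℙ (GaloisField p n) (Fin 3 → GaloisField p n))
      = q ^ 2 + q + 1 := by
    rw [← Nat.card_eq_fintype_card]
    exact stmt9_aux hK
  have horder : ProjectivePlane.order (ℙ (GaloisField p n) (Fin 3 → GaloisField p n))
      (ℙ (GaloisField p n) (Fin 3 → GaloisField p n)) = q := by
    have h := ProjectivePlane.card_points (ℙ (GaloisField p n) (Fin 3 → GaloisField p n))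
      (ℙ (GaloisField p n) (Fin 3 → GaloisField p n))
    rw [hcardP] at h
    nlinarith [h, sq_nonneg (ProjectivePlane.order (ℙ (GaloisField p n) (Fin 3 → GaloisField p n))
      (ℙ (GaloisField p n) (Fin 3 → GaloisField p n)) - q)]
  let e : (ℙ (GaloisField p n) (Fin 3 → GaloisField p n)) ≃ Fin (q ^ 2 + q + 1) :=
    Fintype.equivFinOfCardEq hcardP
  refine ⟨fun x y => e.symm x ∈ e.symm y, ?_, ?_, ?_⟩
  · intro x
    have heq : {y // e.symm x ∈ e.symm y}
        ≃ {l : ℙ (GaloisField p n) (Fin 3 → GaloisField p n) // e.symm x ∈ l} :=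
      e.symm.subtypeEquiv fun y => Iff.rfl
    rw [Nat.card_congr heq]
    have h := ProjectivePlane.lineCount_eq
      (ℙ (GaloisField p n) (Fin 3 → GaloisField p n)) (e.symm x)
    rw [horder] at h
    exact h
  · intro y
    have heq : {x // e.symm x ∈ e.symm y}
        ≃ {pt : ℙ (GaloisField p n) (Fin 3 → GaloisField p n) // pt ∈ e.symm y} :=
      e.symm.subtypeEquiv fun x => Iff.rfl
    rw [Nat.card_congr heq]
    have h := ProjectivePlane.pointCount_eq
      (ℙ (GaloisField p n) (Fin 3 → GaloisField p n)) (e.symm y)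
    rw [horder] at h
    exact h
  · rintro ⟨x, x', y, y', hx, hy, h1, h2, h3, h4⟩
    rcases Configuration.Nondegenerate.eq_or_eq h1 h2 h3 h4 with h | h
    · exact hx (e.symm.injective h)
    · exact hy (e.symm.injective h)
end

section
/- In the bipartite graph constructed by Algorithm 1 (layers 0–3 over GF(q), using the mutually-orthogonal squares L^(0), ..., L^(q-1)), suppose two layer-3 vertices x̂_{m,i} and x̂_{m',i'} with (m,i) ≠ (m',i') are both adjacent to two distinct layer-2 vertices ŷ_{j,μ} and ŷ_{j',μ'} with j, j' ≥ 1 and j ≠ j'. Then L^(m)_{i,j-1} = L^(m')_{i',j-1} and L^(m)_{i,j'-1} = L^(m')_{i',j'-1}, which is impossible since distinct squares of the family agree only in column 0. -/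
/-- In the layered construction of Algorithm 1 over `F = GF(q)`, two distinct
layer-3 vertices `x̂_{m,i} ≠ x̂_{m',i'}` cannot both be adjacent to two
layer-2 vertices `ŷ_{j,μ}`, `ŷ_{j',μ'}` in distinct columns `j ≠ j'` (with
`j, j' ≥ 1`): adjacency means `μ = L^(m)_{i,j-1} = L^(m')_{i',j-1}` and
`μ' = L^(m)_{i,j'-1} = L^(m')_{i',j'-1}` where `L^(m)_{i,c} = i + m·c`, which
is impossible. Here `c, c'` denote the distinct columns `j-1, j'-1`. -/
theorem stmt10 {q : ℕ} (hq : IsPrimePow q) (F : Type*) [Field F] [Fintype F]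
    (hcard : Fintype.card F = q)
    (m i m' i' : F) (hne : (m, i) ≠ (m', i'))
    (c c' : F) (hcc : c ≠ c') (μ μ' : F)
    (h1 : μ = i + m * c) (h2 : μ = i' + m' * c)
    (h3 : μ' = i + m * c') (h4 : μ' = i' + m' * c') : False := by
  have e1 : i + m * c = i' + m' * c := h1.symm.trans h2
  have e2 : i + m * c' = i' + m' * c' := h3.symm.trans h4
  have h5 : (m - m') * (c - c') = 0 := by linear_combination e1 - e2
  have hm : m = m' := by
    rcases mul_eq_zero.mp h5 with h | h
    · exact sub_eq_zero.mp h
    · exact absurd (sub_eq_zero.mp h) hcc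
  have hi : i = i' := by
    rw [hm] at e1
    linear_combination e1
  exact hne (by rw [hm, hi])
end

section
/- For every prime power q and every integer n ≥ 1, there exists a simple bipartite graph G = (X, Y, E) of girth at least 6 with every vertex of X having degree q+1, every vertex of Y having degree p_n(q), |Y| = p_{n+1}(q), and |X| = p_{n+1}(q)·p_n(q)/(q+1), where p_n(q) = (q^{n+1}−1)/(q−1). -/
/-!
Take for `Y` the one-dimensional and for `X` the two-dimensional subspaces of `𝔽_q^(n+2)` (the
points and lines of `PG(n+1, q)`), with containment as incidence; no induction on `n` is needed.
A plane contains `p_1(q) = q + 1` one-dimensional subspaces, and the planes through a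
one-dimensional `W` correspond to the one-dimensional subspaces of the quotient by `W`, so there
are `p_n(q)` of them. Two distinct one-dimensional subspaces span the only plane containing both,
which rules out `4`-cycles, and `|X|` follows by double counting.
-/

/-- `p n q = q^n + q^{n-1} + ... + q + 1 = (q^{n+1} - 1)/(q - 1)`. -/
def p (q n : ℕ) : ℕ := ∑ i ∈ Finset.range (n + 1), q ^ i

open Module Submodule

theorem IsPrimePow.exists_field_natCard_eq {q : ℕ} (hq : IsPrimePow q) :
    ∃ (F : Type) (_ : Field F) (_ : Finite F), Nat.card F = q := by
  obtain ⟨r, k, hr, hk, rfl⟩ := hq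
  have : Fact r.Prime := ⟨hr.nat_prime⟩
  exact ⟨GaloisField r k, inferInstance, inferInstance, GaloisField.card r k hk.ne'⟩

def Equiv.subtypeSubtypeComm {α : Type*} (P Q : α → Prop) :
    {x : Subtype P // Q x.1} ≃ {x : Subtype Q // P x.1} :=
  (subtypeSubtypeEquivSubtypeInter P Q).trans <|
    (subtypeEquivRight fun _ => and_comm).trans (subtypeSubtypeEquivSubtypeInter Q P).symm

theorem Nat.card_mul_eq_card_mul {α β : Type*} [Finite α] [Finite β] (r : α → β → Prop)
    {k l : ℕ} (hα : ∀ a, Nat.card {b // r a b} = k) (hβ : ∀ b, Nat.card {a // r a b} = l) :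
    Nat.card α * k = Nat.card β * l := by
  classical
  have := Fintype.ofFinite α
  have := Fintype.ofFinite β
  simp only [Nat.card_eq_fintype_card, Fintype.card_subtype] at hα hβ ⊢
  exact Finset.card_mul_eq_card_mul r (fun a _ => hα a) (fun b _ => hβ b)

theorem exists_rel_fin_of_natCard {α β : Type*} [Finite α] [Finite β] (r : α → β → Prop)
    {a b k l : ℕ} (hα : Nat.card α = a) (hβ : Nat.card β = b)
    (hk : ∀ x, Nat.card {y // r x y} = k) (hl : ∀ y, Nat.card {x // r x y} = l)
    (hr : ∀ x x' y y', r x y → r x' y → r x y' → r x' y' → x = x' ∨ y = y') :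
    ∃ E : Fin a → Fin b → Prop,
      (∀ x, Nat.card {y // E x y} = k) ∧
      (∀ y, Nat.card {x // E x y} = l) ∧
      ¬ ∃ x x' y y', x ≠ x' ∧ y ≠ y' ∧ E x y ∧ E x' y ∧ E x y' ∧ E x' y' := by
  subst hα hβ
  let eα := Finite.equivFin α
  let eβ := Finite.equivFin β
  refine ⟨fun i j => r (eα.symm i) (eβ.symm j), fun i => ?_, fun j => ?_, ?_⟩
  · rw [← hk (eα.symm i)]
    exact Nat.card_congr (eβ.symm.subtypeEquiv fun _ => Iff.rfl)
  · rw [← hl (eβ.symm j)]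
    exact Nat.card_congr (eα.symm.subtypeEquiv fun _ => Iff.rfl)
  · rintro ⟨i, i', j, j', hi, hj, h₁, h₂, h₃, h₄⟩
    obtain h | h := hr _ _ _ _ h₁ h₂ h₃ h₄
    · exact hi (eα.symm.injective h)
    · exact hj (eβ.symm.injective h)

abbrev Subspaces (R M : Type*) [Semiring R] [AddCommMonoid M] [Module R M] (k : ℕ) : Type _ :=
  {W : Submodule R M // finrank R W = k}

section DivisionRing

variable {K V : Type*} [DivisionRing K] [AddCommGroup V] [Module K V] [FiniteDimensional K V]

theorem finrank_comap_mkQ (W : Submodule K V) (U : Submodule K (V ⧸ W)) :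
    finrank K (comap W.mkQ U) = finrank K U + finrank K W := by
  let f : comap W.mkQ U →ₗ[K] V ⧸ W := W.mkQ ∘ₗ (comap W.mkQ U).subtype
  have hrange : LinearMap.range f = U := by
    rw [LinearMap.range_comp, range_subtype, map_comap_eq_of_surjective W.mkQ_surjective]
  have hker : LinearMap.ker f = comap (comap W.mkQ U).subtype W := by
    rw [LinearMap.ker_comp, ker_mkQ]
  rw [← LinearMap.finrank_range_add_finrank_ker f, hrange, hker,
    (comapSubtypeEquivOfLe (le_comap_mkQ W U)).finrank_eq]

theorem eq_sup_of_finrank_eq_two {U W W' : Submodule K V}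
    (hU : finrank K U = 2) (hW : finrank K W = 1) (hW' : finrank K W' = 1) (hne : W ≠ W')
    (hWU : W ≤ U) (hW'U : W' ≤ U) : U = W ⊔ W' := by
  have hlt : W < W ⊔ W' := by
    refine lt_of_le_of_ne le_sup_left fun h => hne ?_
    exact (eq_of_le_of_finrank_eq (h ▸ le_sup_right) (hW'.trans hW.symm)).symm
  have := finrank_lt_finrank_of_lt hlt
  have := finrank_mono (sup_le hWU hW'U)
  exact (eq_of_le_of_finrank_eq (sup_le hWU hW'U) (by omega)).symm

end DivisionRing

section Field

variable {F V : Type*} [Field F] [Finite F] [AddCommGroup V] [Module F V]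

theorem natCard_subspaces_one {d : ℕ} (h : finrank F V = d + 1) :
    Nat.card (Subspaces F V 1) = p (Nat.card F) d := by
  rw [← Nat.card_congr (Projectivization.equivSubmodule F V),
    Projectivization.card_of_finrank F V h, p]

theorem natCard_subspaces_one_le {U : Submodule F V} (hU : finrank F U = 2) :
    Nat.card {W : Subspaces F V 1 // W.1 ≤ U} = Nat.card F + 1 := by
  have e : Subspaces F U 1 ≃ {W : {W // W ≤ U} // finrank F W.1 = 1} :=
    (MapSubtype.orderIso U).toEquiv.subtypeEquiv fun W =>
      (finrank_map_subtype_eq U W).symm ▸ Iff.rfl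
  have hlines : Nat.card (Subspaces F U 1) = Nat.card F + 1 := by
    simp [natCard_subspaces_one (d := 1) hU, p, Finset.sum_range_succ, add_comm]
  rw [← hlines]
  exact Nat.card_congr <|
    (Equiv.subtypeSubtypeComm (fun W : Submodule F V => finrank F W = 1) (· ≤ U)).trans e.symm

theorem natCard_subspaces_two_ge [FiniteDimensional F V] {W : Submodule F V}
    (hW : finrank F W = 1) {m : ℕ} (hV : finrank F V = m + 2) :
    Nat.card {U : Subspaces F V 2 // W ≤ U.1} = p (Nat.card F) m := by
  have e : Subspaces F (V ⧸ W) 1 ≃ {U : Set.Ici W // finrank F U.1 = 2} :=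
    (comapMkQRelIso W).toEquiv.subtypeEquiv fun U => by
      change _ ↔ finrank F (comap W.mkQ U) = 2
      rw [finrank_comap_mkQ, hW]
      omega
  have hquot : finrank F (V ⧸ W) = m + 1 := by
    have := finrank_quotient_add_finrank W
    omega
  rw [← natCard_subspaces_one hquot]
  exact Nat.card_congr ((Equiv.subtypeSubtypeComm _ _).trans e.symm)

end Field

theorem stmt15_general {q : ℕ} (hq : IsPrimePow q) (n : ℕ) :
    ∃ E : Fin (p q (n + 1) * p q n / (q + 1)) → Fin (p q (n + 1)) → Prop,
      (∀ x, Nat.card {y // E x y} = q + 1) ∧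
      (∀ y, Nat.card {x // E x y} = p q n) ∧
      ¬ ∃ x x' y y', x ≠ x' ∧ y ≠ y' ∧ E x y ∧ E x' y ∧ E x y' ∧ E x' y' := by
  obtain ⟨F, _, _, rfl⟩ := hq.exists_field_natCard_eq
  have hV : finrank F (Fin (n + 2) → F) = n + 2 := finrank_fin_fun F
  let incident (U : Subspaces F (Fin (n + 2) → F) 2) (W : Subspaces F (Fin (n + 2) → F) 1) :
      Prop := W.1 ≤ U.1
  have hlines (U) : Nat.card {W // incident U W} = Nat.card F + 1 :=
    natCard_subspaces_one_le U.2
  have hplanes (W) : Nat.card {U // incident U W} = p (Nat.card F) n :=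
    natCard_subspaces_two_ge W.2 hV
  have hpoints := natCard_subspaces_one hV
  have hcount := Nat.card_mul_eq_card_mul incident hlines hplanes
  refine exists_rel_fin_of_natCard incident ?_ hpoints hlines hplanes ?_
  · rw [← hpoints, ← hcount, Nat.mul_div_cancel _ (Nat.succ_pos _)]
  · intro U U' W W' hUW hU'W hUW' hU'W'
    by_contra! h
    have hne : W.1 ≠ W'.1 := fun h' => h.2 (Subtype.ext h')
    exact h.1 (Subtype.ext ((eq_sup_of_finrank_eq_two U.2 W.2 W'.2 hne hUW hUW').trans
      (eq_sup_of_finrank_eq_two U'.2 W.2 W'.2 hne hU'W hU'W').symm))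

/-- Main existence theorem: for every prime power `q` and `n ≥ 1` there is a
simple bipartite graph of girth at least `6` (no `4`-cycles) with `X`-degrees
`q+1`, `Y`-degrees `p_n(q)`, `|Y| = p_{n+1}(q)`, and
`|X| = p_{n+1}(q)·p_n(q)/(q+1)`. -/
theorem stmt15 {q : ℕ} (hq : IsPrimePow q) (n : ℕ) (hn : 1 ≤ n) :
    ∃ E : Fin (p q (n + 1) * p q n / (q + 1)) → Fin (p q (n + 1)) → Prop,
      (∀ x, Nat.card {y // E x y} = q + 1) ∧
      (∀ y, Nat.card {x // E x y} = p q n) ∧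
      ¬ ∃ x x' y y', x ≠ x' ∧ y ≠ y' ∧ E x y ∧ E x' y ∧ E x y' ∧ E x' y' :=
  stmt15_general hq n
end
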